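/- For the union over distinct pairs {i,j} ≠ {i',j'} of index pairs, the differences between the affine translates O_{ij} and O_{i'j'} cover exactly (Σα_i)^⊥ ∖ span(α₀,...,α₄), and for each nonzero μ ∈ span(α₀',...,α₄') ∩ (Σα_i)^⊥ there are exactly three unordered pairs {{i,j},{i',j'}} whose difference set is the coset span(α₀,...,α₄) + μ; consistently, C(10,2) = 45 = 3 · (16 − 1). -/
import Mathlib


/-- Basis vectors `α₀, …, α₄` of the first summand of `𝔽₂^{10}`. -/
noncomputable def alphaV (i : Fin 5) : (Fin 5 ⊕ Fin 5) → ZMod 2 :=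
  Pi.single (Sum.inl i) 1

/-- Basis vectors `α₀', …, α₄'` of the second summand. -/
noncomputable def alphaV' (i : Fin 5) : (Fin 5 ⊕ Fin 5) → ZMod 2 :=
  Pi.single (Sum.inr i) 1

/-- The symplectic form pairing `α_i` with `α_i'`. -/
def sympB (x y : (Fin 5 ⊕ Fin 5) → ZMod 2) : ZMod 2 :=
  ∑ i : Fin 5, (x (Sum.inl i) * y (Sum.inr i) + x (Sum.inr i) * y (Sum.inl i))

/-- `η_{i,i+1} = α'_{i+3}` and `η_{i,i+2} = α'_{i-1} + α'_{i+1} + α'_{i+3}`,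
indexing the ten pairs `{i,j}` by `(i, t) ∈ Fin 5 × Fin 2`. -/
noncomputable def etaV : Fin 5 × Fin 2 → (Fin 5 ⊕ Fin 5) → ZMod 2
  | (i, 0) => alphaV' (i + 3)
  | (i, 1) => alphaV' (i - 1) + alphaV' (i + 1) + alphaV' (i + 3)

/-- Computable version of the `inr`-coordinates of `etaV`. -/
def evC : Fin 5 × Fin 2 → Fin 5 → ZMod 2
  | (i, 0) => fun j => if j = i + 3 then 1 else 0
  | (i, 1) => fun j =>
      (if j = i - 1 then 1 else 0) + (if j = i + 1 then 1 else 0) + (if j = i + 3 then 1 else 0)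

lemma etaV_inr : ∀ (p : Fin 5 × Fin 2) (j : Fin 5), etaV p (Sum.inr j) = evC p j := by decide

lemma etaV_inl : ∀ (p : Fin 5 × Fin 2) (j : Fin 5), etaV p (Sum.inl j) = 0 := by decide

lemma mem_spanA (v : (Fin 5 ⊕ Fin 5) → ZMod 2) :
    v ∈ Submodule.span (ZMod 2) (Set.range alphaV) ↔ ∀ j, v (Sum.inr j) = 0 := by
  constructor
  · intro hv
    have : Submodule.span (ZMod 2) (Set.range alphaV) ≤
        (Submodule.pi {x | ∃ j, x = Sum.inr j} (fun _ => ⊥) :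
          Submodule (ZMod 2) ((Fin 5 ⊕ Fin 5) → ZMod 2)) := by
      rw [Submodule.span_le]
      rintro _ ⟨i, rfl⟩ x ⟨j, rfl⟩
      simp [alphaV, Pi.single_apply]
    intro j
    exact this hv (Sum.inr j) ⟨j, rfl⟩
  · intro hv
    have hv2 : v = ∑ i : Fin 5, v (Sum.inl i) • alphaV i := by
      funext x
      rcases x with a | a
      · simp [alphaV, Pi.single_apply, Finset.sum_apply]
      · simp [alphaV, Pi.single_apply, Finset.sum_apply, hv a]
    rw [hv2]
    exact Submodule.sum_mem _ fun i _ =>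
      Submodule.smul_mem _ _ (Submodule.subset_span ⟨i, rfl⟩)

lemma mem_spanA' (v : (Fin 5 ⊕ Fin 5) → ZMod 2) :
    v ∈ Submodule.span (ZMod 2) (Set.range alphaV') ↔ ∀ j, v (Sum.inl j) = 0 := by
  constructor
  · intro hv
    have : Submodule.span (ZMod 2) (Set.range alphaV') ≤
        (Submodule.pi {x | ∃ j, x = Sum.inl j} (fun _ => ⊥) :
          Submodule (ZMod 2) ((Fin 5 ⊕ Fin 5) → ZMod 2)) := by
      rw [Submodule.span_le]
      rintro _ ⟨i, rfl⟩ x ⟨j, rfl⟩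
      simp [alphaV', Pi.single_apply]
    intro j
    exact this hv (Sum.inl j) ⟨j, rfl⟩
  · intro hv
    have hv2 : v = ∑ i : Fin 5, v (Sum.inr i) • alphaV' i := by
      funext x
      rcases x with a | a
      · simp [alphaV', Pi.single_apply, Finset.sum_apply, hv a]
      · simp [alphaV', Pi.single_apply, Finset.sum_apply]
    rw [hv2]
    exact Submodule.sum_mem _ fun i _ =>
      Submodule.smul_mem _ _ (Submodule.subset_span ⟨i, rfl⟩)

lemma sympB_sum (x : (Fin 5 ⊕ Fin 5) → ZMod 2) :
    sympB x (∑ i : Fin 5, alphaV i) = ∑ j : Fin 5, x (Sum.inr j) := by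
  unfold sympB
  have h1 : ∀ j : Fin 5, (∑ i : Fin 5, alphaV i) (Sum.inl j) = 1 := by decide
  have h2 : ∀ j : Fin 5, (∑ i : Fin 5, alphaV i) (Sum.inr j) = 0 := by decide
  simp [h1, h2]

set_option maxHeartbeats 2000000 in
lemma core1 : ∀ w : Fin 5 → ZMod 2, ((∑ j, w j) = 0 ∧ w ≠ 0) ↔
    ∃ p p' : Fin 5 × Fin 2, p ≠ p' ∧ (fun j => evC p j + evC p' j) = w := by decide

set_option maxHeartbeats 4000000 in
lemma core2 : ∀ w : Fin 5 → ZMod 2, (∑ j, w j) = 0 → w ≠ 0 →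
    ((Finset.univ.filter (fun q : (Fin 5 × Fin 2) × (Fin 5 × Fin 2) =>
        q.1 ≠ q.2 ∧ (fun j => evC q.1 j + evC q.2 j) = w)).image
      (fun q => ({q.1, q.2} : Finset (Fin 5 × Fin 2)))).card = 3 := by decide

lemma eta_eq (p p' : Fin 5 × Fin 2) (μ : (Fin 5 ⊕ Fin 5) → ZMod 2)
    (hμ : ∀ j, μ (Sum.inl j) = 0) :
    etaV p + etaV p' = μ ↔ (fun j => evC p j + evC p' j) = (fun j => μ (Sum.inr j)) := by
  constructor
  · intro h
    funext j
    rw [← h]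
    simp [etaV_inr]
  · intro h
    funext x
    rcases x with a | a
    · simp [etaV_inl, hμ a]
    · have := congrFun h a
      simpa [etaV_inr] using this

/-- The differences between the translates `O_{ij}` and `O_{i'j'}`, i.e. the
cosets `span(α₀,…,α₄) + (η_{ij} + η_{i'j'})` over distinct pairs, cover exactly
`(Σα_i)^⊥ ∖ span(α₀,…,α₄)`; for each nonzero `μ ∈ span(α'_i) ∩ (Σα_i)^⊥` there
are exactly three unordered pairs `{{i,j},{i'j'}}` with `η_{ij}+η_{i'j'} = μ`;
and consistently `C(10,2) = 45 = 3·(16−1)`. -/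
theorem stmt_10 :
    (⋃ p : (Fin 5 × Fin 2) × (Fin 5 × Fin 2), ⋃ (_ : p.1 ≠ p.2),
        {v : (Fin 5 ⊕ Fin 5) → ZMod 2 |
          ∃ l ∈ Submodule.span (ZMod 2) (Set.range alphaV), v = etaV p.1 + etaV p.2 + l})
      = {x : (Fin 5 ⊕ Fin 5) → ZMod 2 | sympB x (∑ i : Fin 5, alphaV i) = 0} \
          ↑(Submodule.span (ZMod 2) (Set.range alphaV)) ∧
    (∀ μ : (Fin 5 ⊕ Fin 5) → ZMod 2,
      μ ∈ Submodule.span (ZMod 2) (Set.range alphaV') → μ ≠ 0 →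
      sympB μ (∑ i : Fin 5, alphaV i) = 0 →
      Set.ncard {s : Finset (Fin 5 × Fin 2) |
        ∃ p p' : Fin 5 × Fin 2, p ≠ p' ∧ s = {p, p'} ∧ etaV p + etaV p' = μ} = 3) ∧
    Nat.choose 10 2 = 45 ∧ 45 = 3 * (16 - 1) := by
  refine ⟨?_, ?_, by decide, rfl⟩
  · ext v
    simp only [Set.mem_iUnion, Set.mem_setOf_eq, Set.mem_diff, SetLike.mem_coe,
      sympB_sum, mem_spanA]
    constructor
    · rintro ⟨⟨p, p'⟩, hne, l, hl, rfl⟩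
      have hl' := hl
      have hw : (∑ j, (fun j => evC p j + evC p' j) j) = 0 ∧
          (fun j => evC p j + evC p' j) ≠ (0 : Fin 5 → ZMod 2) :=
        (core1 _).mpr ⟨p, p', hne, rfl⟩
      constructor
      · calc ∑ j : Fin 5, (etaV p + etaV p' + l) (Sum.inr j)
            = ∑ j : Fin 5, (evC p j + evC p' j) := by
              refine Finset.sum_congr rfl fun j _ => ?_
              simp [etaV_inr, hl' j]
          _ = 0 := hw.1
      · intro hall
        apply hw.2
        funext j
        have := hall j
        simp only [Pi.add_apply, etaV_inr, hl' j, add_zero] at this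
        simpa using this
    · rintro ⟨hsum, hns⟩
      have hwne : (fun j => v (Sum.inr j)) ≠ (0 : Fin 5 → ZMod 2) := by
        intro h0
        exact hns fun j => congrFun h0 j
      obtain ⟨p, p', hne, hw⟩ := (core1 (fun j => v (Sum.inr j))).mp ⟨hsum, hwne⟩
      refine ⟨(p, p'), hne, v - (etaV p + etaV p'), ?_, by abel⟩
      intro j
      have := congrFun hw j
      simp only [Pi.sub_apply, Pi.add_apply, etaV_inr]
      rw [this]
      ring
  · intro μ hμ hne hs
    have hμ' : ∀ j, μ (Sum.inl j) = 0 := (mem_spanA' μ).mp hμ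
    have hsum : (∑ j : Fin 5, (fun j => μ (Sum.inr j)) j) = 0 := by
      rw [sympB_sum] at hs; exact hs
    have hwne : (fun j => μ (Sum.inr j)) ≠ (0 : Fin 5 → ZMod 2) := by
      intro h0
      apply hne
      funext x
      rcases x with a | a
      · exact hμ' a
      · exact congrFun h0 a
    have hset : {s : Finset (Fin 5 × Fin 2) |
        ∃ p p' : Fin 5 × Fin 2, p ≠ p' ∧ s = {p, p'} ∧ etaV p + etaV p' = μ}
        = ↑((Finset.univ.filter (fun q : (Fin 5 × Fin 2) × (Fin 5 × Fin 2) =>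
            q.1 ≠ q.2 ∧ (fun j => evC q.1 j + evC q.2 j) = (fun j => μ (Sum.inr j)))).image
          (fun q => ({q.1, q.2} : Finset (Fin 5 × Fin 2)))) := by
      ext s
      simp only [Set.mem_setOf_eq, Finset.coe_image, Set.mem_image, Finset.mem_coe,
        Finset.mem_filter, Finset.mem_univ, true_and]
      constructor
      · rintro ⟨p, p', hpq, rfl, heq⟩
        exact ⟨(p, p'), ⟨hpq, (eta_eq p p' μ hμ').mp heq⟩, rfl⟩
      · rintro ⟨q, ⟨hpq, heq⟩, rfl⟩
        exact ⟨q.1, q.2, hpq, rfl, (eta_eq q.1 q.2 μ hμ').mpr heq⟩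
    rw [hset, Set.ncard_coe_finset]
    exact core2 _ hsum hwne
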